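/- The real number θ = (-27+8√14)^{1/4} (the positive real fourth root of the positive real number -27+8√14) has minimal polynomial x⁸ + 54x⁴ - 167 over ℚ; consequently the field L = ℚ(θ) has degree 8 over ℚ, contains the real quadratic field ℚ(√14), and satisfies [L : ℚ(√14)] = 4. -/

import Mathlib

/-!
Over `K = ℚ(√14)` the number `θ` is a root of `X⁴ - c` with `c = -27 + 8√14`. Neither `c` nor `-c`
is a square in `K`: `-c < 0` in `ℝ`, and the conjugate embedding `√14 ↦ -√14` sends `c` to
`-27 - 8√14 < 0`. Hence `X⁴ - c` is irreducible over `K`, so `[ℚ(θ) : K] = 4` and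
`[ℚ(θ) : ℚ] = 2 · 4 = 8`, which forces the degree-8 polynomial `X⁸ + 54X⁴ - 167` vanishing at `θ`
to be its minimal polynomial.
-/

open IntermediateField Polynomial

section XPowSubC

variable {K : Type*} [Field K]

theorem X_sq_sub_C_irreducible {a : K} (ha : ¬IsSquare a) : Irreducible (X ^ 2 - C a) :=
  X_pow_sub_C_irreducible_of_prime Nat.prime_two fun b hb ↦ ha ⟨b, by rw [← hb, sq]⟩

variable {L : Type*} [Field L] [Algebra K L] {x : L} {n : ℕ} {a : K}

theorem isIntegral_of_minpoly_eq_X_pow_sub_C (hn : 0 < n) (h : minpoly K x = X ^ n - C a) :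
    IsIntegral K x :=
  minpoly.ne_zero_iff.mp (h ▸ X_pow_sub_C_ne_zero hn a)

theorem finrank_adjoin_simple_of_minpoly_eq_X_pow_sub_C (hn : 0 < n)
    (h : minpoly K x = X ^ n - C a) : Module.finrank K K⟮x⟯ = n := by
  rw [adjoin.finrank (isIntegral_of_minpoly_eq_X_pow_sub_C hn h), h, natDegree_X_pow_sub_C]

/-- Half of Capelli's criterion: `X⁴ - c` is reducible iff `c` is a square or
`c = -4b⁴ = -(2b²)²`. -/
theorem X_pow_four_sub_C_irreducible {c : K} (hc : ¬IsSquare c) (hc' : ¬IsSquare (-c)) :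
    Irreducible (X ^ 4 - C c) := by
  simpa using X_pow_mul_sub_C_irreducible (n := 2) (X_sq_sub_C_irreducible hc)
    fun E _ _ y hy ↦ by
      -- a square root of `√c` in `K(√c)` would have norm squaring to `N(√c) = -c`
      have hnorm : Algebra.norm K (AdjoinSimple.gen K y) = -c := by
        rw [← adjoin.powerBasis_gen (isIntegral_of_minpoly_eq_X_pow_sub_C two_pos hy),
          Algebra.PowerBasis.norm_gen_eq_coeff_zero_minpoly]
        simp [minpoly_gen, hy]
      exact X_sq_sub_C_irreducible fun hsq ↦ hc' (hnorm ▸ hsq.map (Algebra.norm K))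

theorem minpoly_eq_X_sq_sub_C (ha : ¬IsSquare a) (hx : x ^ 2 = algebraMap K L a) :
    minpoly K x = X ^ 2 - C a :=
  (minpoly.eq_of_irreducible_of_monic (X_sq_sub_C_irreducible ha) (by simp [hx])
    (monic_X_pow_sub_C _ two_ne_zero)).symm

theorem exists_algHom_adjoin_gen_eq_neg (ha : ¬IsSquare a) (hx : x ^ 2 = algebraMap K L a) :
    ∃ τ : K⟮x⟯ →ₐ[K] L, τ (AdjoinSimple.gen K x) = -x := by
  have hmin := minpoly_eq_X_sq_sub_C ha hx
  have hint := isIntegral_of_minpoly_eq_X_pow_sub_C two_pos hmin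
  refine ⟨(algHomAdjoinIntegralEquiv K hint).symm ⟨-x, ?_⟩,
    algHomAdjoinIntegralEquiv_symm_apply_gen K hint _⟩
  rw [mem_aroots, hmin]
  exact ⟨X_pow_sub_C_ne_zero two_pos _, by simp [hx]⟩

theorem minpoly_eq_of_natDegree_le_finrank {p : K[X]} (hp : p.Monic) (hx : aeval x p = 0)
    (hdeg : p.natDegree ≤ Module.finrank K K⟮x⟯) : minpoly K x = p := by
  have hint : IsIntegral K x := ⟨p, hp, hx⟩
  rw [adjoin.finrank hint] at hdeg
  exact (eq_of_monic_of_dvd_of_natDegree_le (minpoly.monic hint) hp (minpoly.dvd K x hx) hdeg).symm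

end XPowSubC

theorem not_isSquare_of_map_neg {R S F : Type*} [Semiring R] [Semiring S] [LinearOrder S]
    [ExistsAddOfLE S] [PosMulMono S] [AddLeftMono S] [FunLike F R S] [RingHomClass F R S]
    (f : F) {x : R} (hx : f x < 0) : ¬IsSquare x :=
  fun h ↦ (h.map f).nonneg.not_gt hx

theorem sqrt_14_sq : √(14 : ℝ) ^ 2 = algebraMap ℚ ℝ 14 := by simp

theorem not_isSquare_14 : ¬IsSquare (14 : ℚ) := by norm_num

theorem neg_27_add_8_mul_sqrt_14_pos : 0 < -27 + 8 * √(14 : ℝ) := by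
  nlinarith [Real.sq_sqrt (show (0 : ℝ) ≤ 14 by norm_num), Real.sqrt_nonneg 14]

theorem minpoly_adjoin_sqrt_14 {θ : ℝ} (hθ : θ ^ 4 = -27 + 8 * √14) :
    minpoly ℚ⟮√(14 : ℝ)⟯ θ = X ^ 4 - C (-27 + 8 * AdjoinSimple.gen ℚ √14) := by
  set c : ℚ⟮√(14 : ℝ)⟯ := -27 + 8 * AdjoinSimple.gen ℚ √14
  have hc : ¬IsSquare c := by
    obtain ⟨τ, hτ⟩ := exists_algHom_adjoin_gen_eq_neg not_isSquare_14 sqrt_14_sq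
    refine not_isSquare_of_map_neg τ ?_
    simp only [c, map_add, map_mul, map_neg, map_ofNat, hτ]
    linarith [Real.sqrt_nonneg 14]
  have hc' : ¬IsSquare (-c) := by
    refine not_isSquare_of_map_neg (algebraMap ℚ⟮√(14 : ℝ)⟯ ℝ) ?_
    simp only [c, map_neg, map_add, map_mul, map_ofNat, AdjoinSimple.algebraMap_gen]
    linarith [neg_27_add_8_mul_sqrt_14_pos]
  refine (minpoly.eq_of_irreducible_of_monic (X_pow_four_sub_C_irreducible hc hc') ?_
    (monic_X_pow_sub_C _ four_ne_zero)).symm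
  simp only [map_sub, map_pow, aeval_X, aeval_C, c, map_add, map_mul, map_neg, map_ofNat,
    AdjoinSimple.algebraMap_gen, hθ, sub_self]

/-- The real number `θ = (-27+8√14)^{1/4}` (the positive real fourth root of the
positive real number `-27+8√14`) has minimal polynomial `x⁸ + 54x⁴ - 167` over `ℚ`;
consequently `L = ℚ(θ)` has degree `8` over `ℚ`, contains the real quadratic field
`ℚ(√14)`, and satisfies `[L : ℚ(√14)] = 4`. -/
theorem minpoly_fourth_root_neg27_add_8_sqrt14 (θ : ℝ)
    (hθ : θ = (-27 + 8 * Real.sqrt 14) ^ ((1 : ℝ) / 4)) :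
    minpoly ℚ θ = X ^ 8 + 54 * X ^ 4 - 167 ∧
    Module.finrank ℚ ℚ⟮θ⟯ = 8 ∧
    ∃ h : ℚ⟮Real.sqrt 14⟯ ≤ ℚ⟮θ⟯,
      Module.finrank ℚ⟮Real.sqrt 14⟯ (IntermediateField.extendScalars h) = 4 := by
  have hθ4 : θ ^ 4 = -27 + 8 * √14 := by
    rw [hθ, ← Real.rpow_natCast, ← Real.rpow_mul neg_27_add_8_mul_sqrt_14_pos.le]
    norm_num
  have h : ℚ⟮√(14 : ℝ)⟯ ≤ ℚ⟮θ⟯ := by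
    rw [adjoin_simple_le_iff, show √14 = (θ ^ 4 + 27) / 8 by linarith]
    have hθ_mem := mem_adjoin_simple_self ℚ θ
    exact div_mem (add_mem (pow_mem hθ_mem 4) (ofNat_mem _ 27)) (ofNat_mem _ 8)
  have hrel : Module.finrank ℚ⟮√(14 : ℝ)⟯ (extendScalars h) = 4 := by
    rw [extendScalars_adjoin, finrank_adjoin_simple_of_minpoly_eq_X_pow_sub_C four_pos
      (minpoly_adjoin_sqrt_14 hθ4)]
  have hdeg : Module.finrank ℚ ℚ⟮θ⟯ = 8 := by
    rw [← finrank_bot_mul_relfinrank h, relfinrank_eq_finrank_of_le h, hrel,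
      finrank_adjoin_simple_of_minpoly_eq_X_pow_sub_C two_pos
        (minpoly_eq_X_sq_sub_C not_isSquare_14 sqrt_14_sq)]
    norm_num
  have hroot : aeval θ (X ^ 8 + 54 * X ^ 4 - 167 : ℚ[X]) = 0 := by
    simp only [map_sub, map_add, map_mul, map_pow, aeval_X, map_ofNat]
    -- `(θ⁴ + 27)² = (8√14)² = 896`
    linear_combination (θ ^ 4 + 27 + 8 * √14) * hθ4 +
      64 * Real.sq_sqrt (show (0 : ℝ) ≤ 14 by norm_num)
  refine ⟨minpoly_eq_of_natDegree_le_finrank (by monicity!) hroot ?_, hdeg, h, hrel⟩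
  rw [hdeg]
  compute_degree!
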